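/- If the forward-Euler predictor is omitted from the cofactor term in FEBDF2, i.e. one considers the modified residual R̂(h) = ρ • (3·v(t+h) − 4·v(t) + v(t−h)) − 2h • ( P(u(t) + h • v(t)) + p(t+h) • H(u(t)) ), then lim_{h→0} h^{-2} • R̂(h) = 2·p(t) • (DH(u(t)))(v(t)), where DH(u(t)) denotes the Fréchet derivative of H at u(t). In particular, whenever p(t) • (DH(u(t)))(v(t)) ≠ 0 the scheme degrades to first-order accuracy without the predictor in the cofactor term. -/

import Mathlib

/-!
With `a = v'`, the stencil `S h = 3 v(t+h) - 4 v(t) + v(t-h)` and the forcing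
`F h = P(u t + h v t) + p(t+h) H(u t)` of the modified residual, the equation at `t` reads
`ρ a(t) = F 0`, so `R̂ h = ρ (S h - 2h a(t)) - 2h (F h - F 0)`. Second-order Taylor expansion
gives `S h - 2h a(t) = 2h² a'(t) + o(h²)`, and `F h - F 0 = h F'(0) + o(h)`.
Differentiating the equation, `ρ a'(t) = DP v + p DH v + p' H` along the solution, whereas
`F'(0) = DP v + p' H` misses the term `p DH v`, which therefore survives in `h⁻² R̂ h`.
-/

open Filter Topology

theorem tendsto_inv_sq_smul_of_hasDerivAt {E : Type*} [NormedAddCommGroup E] [NormedSpace ℝ E]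
    {f f' : ℝ → E} {c : E} {x₀ : ℝ} (hf : ∀ x, HasDerivAt f (f' x) x) (hf₀ : f x₀ = 0)
    (hf'₀ : f' x₀ = 0) (hf' : HasDerivAt f' c x₀) :
    Tendsto (fun x ↦ ((x - x₀) ^ 2)⁻¹ • f x) (𝓝[≠] x₀) (𝓝 ((2 : ℝ)⁻¹ • c)) := by
  set g : ℝ → E := fun x ↦ f x - ((x - x₀) ^ 2 / 2) • c
  have hg : ∀ x, HasDerivAt g (f' x - (x - x₀) • c) x := fun x ↦ by
    have := (((hasDerivAt_id x).sub_const x₀).fun_pow 2).div_const 2 |>.smul_const c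
    refine (hf x).sub (this.congr_deriv ?_)
    simp
  have hg' : (fun x ↦ f' x - (x - x₀) • c) =o[𝓝 x₀] fun x ↦ (x - x₀) ^ 1 := by
    simpa [hf'₀] using hf'.isLittleO
  have hg_small : (fun x ↦ g x - g x₀) =o[𝓝 x₀] fun x ↦ (x - x₀) ^ 2 := by
    simpa using Convex.isLittleO_pow_succ_real convex_univ (Set.mem_univ x₀)
      (fun x _ ↦ (hg x).hasDerivWithinAt) (by simpa using hg')
  have hlim : Tendsto (fun x ↦ ((x - x₀) ^ 2)⁻¹ • g x) (𝓝[≠] x₀) (𝓝 0) := by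
    simpa [g, hf₀] using hg_small.tendsto_inv_smul_nhds_zero.mono_left nhdsWithin_le_nhds
  refine (hlim.add_const ((2 : ℝ)⁻¹ • c)).congr' ?_ |>.trans (by rw [zero_add])
  filter_upwards [self_mem_nhdsWithin] with x hx
  have : (x - x₀) ^ 2 ≠ 0 := pow_ne_zero 2 (sub_ne_zero.mpr hx)
  rw [smul_sub, smul_smul, inv_mul_eq_div, div_div_cancel_left' this,
    sub_add_cancel]

theorem tendsto_bdf2_stencil {E : Type*} [NormedAddCommGroup E] [NormedSpace ℝ E]
    {v a : ℝ → E} {a' : E} {t : ℝ} (hv : ∀ s, HasDerivAt v (a s) s) (ha : HasDerivAt a a' t) :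
    Tendsto (fun h : ℝ ↦
        (h ^ 2)⁻¹ • ((3 : ℝ) • v (t + h) - (4 : ℝ) • v t + v (t - h) - (2 * h) • a t))
      (𝓝[≠] 0) (𝓝 ((2 : ℝ) • a')) := by
  have hf : ∀ h : ℝ, HasDerivAt
      (fun h ↦ (3 : ℝ) • v (t + h) - (4 : ℝ) • v t + v (t - h) - (2 * h) • a t)
      ((3 : ℝ) • a (t + h) - a (t - h) - (2 : ℝ) • a t) h := fun h ↦ by
    have hp := (hv (t + h)).comp_const_add t h
    have hm := (hv (t - h)).comp_const_sub t h
    convert ((hp.const_smul (3 : ℝ)).sub_const ((4 : ℝ) • v t)).add hm |>.sub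
      (((hasDerivAt_id h).const_mul 2).smul_const (a t)) using 1
    · funext x; simp
    · simp [sub_eq_add_neg]
  have hf' : HasDerivAt (fun h : ℝ ↦ (3 : ℝ) • a (t + h) - a (t - h) - (2 : ℝ) • a t)
      ((4 : ℝ) • a') 0 := by
    have hp := HasDerivAt.comp_const_add t 0 (by rwa [add_zero])
    have hm := HasDerivAt.comp_const_sub t 0 (by rwa [sub_zero])
    convert ((hp.const_smul (3 : ℝ)).sub hm).sub_const ((2 : ℝ) • a t) using 1
    · funext x; simp
    · module
  convert tendsto_inv_sq_smul_of_hasDerivAt hf (by simp; module) (by simp; module) hf' using 2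
  · simp
  · module

theorem hasDerivAt_apply_add_smul_add_comp_add_smul {E : Type*} [NormedAddCommGroup E]
    [NormedSpace ℝ E] {P : E → E} {p : ℝ → ℝ} {x : E} {t : ℝ} (w y : E)
    (hP : DifferentiableAt ℝ P x) (hp : DifferentiableAt ℝ p t) :
    HasDerivAt (fun h : ℝ ↦ P (x + h • w) + p (t + h) • y)
      (fderiv ℝ P x w + deriv p t • y) 0 := by
  have hline : HasDerivAt (fun h : ℝ ↦ x + h • w) w 0 := by
    simpa using ((hasDerivAt_id (0 : ℝ)).smul_const w).const_add x
  have hshift : HasDerivAt (fun h ↦ p (t + h)) (deriv p t) 0 :=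
    .comp_const_add t 0 (by simpa using hp.hasDerivAt)
  exact (hP.hasFDerivAt.comp_hasDerivAt_of_eq 0 hline (by simp)).add (hshift.smul_const y)

theorem febdf2_without_predictor_in_cofactor_first_order_general
    {E : Type*} [NormedAddCommGroup E] [NormedSpace ℝ E]
    (ρ : ℝ)
    (P H : E → E) (p : ℝ → ℝ) (u : ℝ → E)
    (hP : ContDiff ℝ 3 P) (hH : ContDiff ℝ 3 H) (hp : ContDiff ℝ 3 p)
    (hu : ContDiff ℝ 4 u)
    (v : ℝ → E) (hv : v = deriv u)
    (hode : ∀ s : ℝ, ρ • deriv v s = P (u s) + p s • H (u s))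
    (t : ℝ) :
    Tendsto
      (fun h : ℝ => (h ^ 2)⁻¹ •
        (ρ • ((3 : ℝ) • v (t + h) - (4 : ℝ) • v t + v (t - h)) -
          (2 * h) • (P (u t + h • v t) + p (t + h) • H (u t))))
      (𝓝[≠] (0 : ℝ))
      (𝓝 ((2 * p t) • (fderiv ℝ H (u t)) (v t))) := by
  subst hv
  set a := deriv (deriv u)
  have hud (s : ℝ) : HasDerivAt u (deriv u s) s :=
    (hu.differentiable (by norm_num) s).hasDerivAt
  have hvd (s : ℝ) : HasDerivAt (deriv u) (a s) s :=
    ((hu.iterate_deriv' 3 1).differentiable (by norm_num) s).hasDerivAt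
  have ha : HasDerivAt a (deriv a t) t :=
    ((hu.iterate_deriv' 2 2).differentiable (by norm_num) t).hasDerivAt
  have hode_deriv : ρ • deriv a t = fderiv ℝ P (u t) (deriv u t) +
      (p t • fderiv ℝ H (u t) (deriv u t) + deriv p t • H (u t)) := by
    have hrhs := ((hP.differentiable (by norm_num) _).hasFDerivAt.comp_hasDerivAt t (hud t)).add
      ((hp.differentiable (by norm_num) t).hasDerivAt.smul
        ((hH.differentiable (by norm_num) _).hasFDerivAt.comp_hasDerivAt t (hud t)))
    have hfun : ρ • a = P ∘ u + p • H ∘ u := funext hode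
    exact (hfun ▸ ha.const_smul ρ).unique hrhs
  have hF := hasDerivAt_apply_add_smul_add_comp_add_smul (deriv u t) (H (u t))
    (hP.differentiable (by norm_num) (u t)) (hp.differentiable (by norm_num) t)
  have hlim := ((tendsto_bdf2_stencil hvd ha).const_smul ρ).sub
    (hF.tendsto_slope_zero.const_smul (2 : ℝ))
  rw [show (2 * p t) • fderiv ℝ H (u t) (deriv u t) = ρ • (2 : ℝ) • deriv a t -
      (2 : ℝ) • (fderiv ℝ P (u t) (deriv u t) + deriv p t • H (u t)) by
    rw [smul_comm, hode_deriv]; module]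
  refine hlim.congr' ?_
  filter_upwards [self_mem_nhdsWithin] with h hh
  have hinv : h⁻¹ = h * (h ^ 2)⁻¹ := by field_simp
  simp only [zero_add, zero_smul, add_zero, ← hode t, hinv]
  module

/-- If the forward-Euler predictor is omitted from the cofactor term in
FEBDF2, the modified residual
`R̂(h) = ρ • (3 v(t+h) − 4 v(t) + v(t−h)) − 2h • (P(u(t) + h • v(t)) + p(t+h) • H(u(t)))`
satisfies `lim_{h→0} h⁻² • R̂(h) = 2 p(t) • (DH(u(t)))(v(t))`, where `DH(u(t))` is the
Fréchet derivative of `H` at `u(t)`; hence whenever `p(t) • (DH(u(t)))(v(t)) ≠ 0` the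
scheme degrades to first-order accuracy. -/
theorem febdf2_without_predictor_in_cofactor_first_order
    {E : Type*} [NormedAddCommGroup E] [NormedSpace ℝ E]
    (ρ : ℝ) (hρ : 0 < ρ)
    (P H : E → E) (p : ℝ → ℝ) (u : ℝ → E)
    (hP : ContDiff ℝ 3 P) (hH : ContDiff ℝ 3 H) (hp : ContDiff ℝ 3 p)
    (hu : ContDiff ℝ 4 u)
    (v : ℝ → E) (hv : v = deriv u)
    (hode : ∀ s : ℝ, ρ • deriv v s = P (u s) + p s • H (u s))
    (t : ℝ) :
    Tendsto
      (fun h : ℝ => (h ^ 2)⁻¹ •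
        (ρ • ((3 : ℝ) • v (t + h) - (4 : ℝ) • v t + v (t - h)) -
          (2 * h) • (P (u t + h • v t) + p (t + h) • H (u t))))
      (𝓝[≠] (0 : ℝ))
      (𝓝 ((2 * p t) • (fderiv ℝ H (u t)) (v t))) :=
  febdf2_without_predictor_in_cofactor_first_order_general ρ P H p u hP hH hp hu v hv hode t
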